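/- Let q = p^e be a prime power. In Q = F_q[x_1,x_2]/(x_1^{q^3}, x_2^{q^3}), let S_0 and S_1 be the images of the Dickson invariants of degrees q^2-q and q^2-1 respectively (S_0 = ∑_{a+b=q} x_1^{a(q-1)} x_2^{b(q-1)}, S_1 = ∑_{a+b=q+1, a,b≥1} x_1^{a(q-1)} x_2^{b(q-1)}). Then S_1^q · S_0^{q-1} ≠ 0 in Q; specifically, the coefficient of x_1^{q^3-q} x_2^{q^3-2q^2+q} in S_1^q S_0^{q-1} is -1 (mod p). -/

import Mathlib

/-!
By Frobenius, `S₁ = S₀ x₂^(q-1) - x₂^(q²-1)` gives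
`S₁^q S₀^(q-1) = S₀^(2q-1) x₂^(q²-q) - S₀^(q-1) x₂^(q³-q)`, and the second summand only
contains monomials with `x₂`-exponent at least `q³ - q`, which is too large.
Since `S₀` is homogeneous, coefficients of its powers can be read off after setting
`x₁ = 1, x₂ = t`, where `S₀` becomes `g(t^(q-1))` with `g = 1 + t + ⋯ + t^q = (1 - t^(q+1))/(1 - t)`.
The wanted coefficient is then that of `t^(q(q-2))` in `g^(2q-1) = g(t^q) · g^(q-1)`.
In characteristic `p`, `g^(q-1) (t^q - 1) = (t^(q+1) - 1)^(q-1) (t - 1)`, and the right-hand side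
has no terms of degree `qj` or `qj - 1` for `1 ≤ j ≤ q - 2`; hence the coefficient of `t^(qj)`
in `g^(q-1)` is `1` for all `j ≤ q - 2`, and the wanted coefficient is `q - 1 = -1`.
-/

open MvPolynomial Finset

/-- The ideal `(x_1^N, …, x_n^N)`. -/
noncomputable def frobIdeal (F : Type) [Field F] (n N : ℕ) :
    Ideal (MvPolynomial (Fin n) F) :=
  Ideal.span (Set.range fun i : Fin n => (MvPolynomial.X i : MvPolynomial (Fin n) F) ^ N)

/-- `S_0 = ∑_{a+b=q} x_1^{a(q-1)} x_2^{b(q-1)}`, the image of the degree-`q²-q` Dickson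
invariant. -/
noncomputable def S0 (F : Type) [Field F] (q : ℕ) : MvPolynomial (Fin 2) F :=
  ∑ i ∈ Finset.range (q + 1),
    MvPolynomial.X 0 ^ ((q - i) * (q - 1)) * MvPolynomial.X 1 ^ (i * (q - 1))

/-- `S_1 = ∑_{a+b=q+1, a,b ≥ 1} x_1^{a(q-1)} x_2^{b(q-1)}`, the image of the
degree-`q²-1` Dickson invariant. -/
noncomputable def S1 (F : Type) [Field F] (q : ℕ) : MvPolynomial (Fin 2) F :=
  ∑ i ∈ Finset.Icc 1 q,
    MvPolynomial.X 0 ^ ((q + 1 - i) * (q - 1)) * MvPolynomial.X 1 ^ (i * (q - 1))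

namespace Polynomial

noncomputable def geomPoly (R : Type*) [Semiring R] (q : ℕ) : R[X] :=
  ∑ i ∈ range (q + 1), X ^ i

variable {R : Type*} [CommRing R]

lemma coeff_mul_X_pow_sub_one (P : R[X]) (k q : ℕ) :
    (P * (X ^ q - 1)).coeff (k + q) = P.coeff k - P.coeff (k + q) := by
  rw [mul_sub, mul_one, coeff_sub, coeff_mul_X_pow]

lemma coeff_mul_X_sub_one (P : R[X]) (k : ℕ) :
    (P * (X - 1)).coeff (k + 1) = P.coeff k - P.coeff (k + 1) := by
  simpa using coeff_mul_X_pow_sub_one P k 1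

lemma coeff_X_pow_sub_one_pow_eq_zero {m k : ℕ} (l : ℕ) (hk : ¬ (m + 1) ∣ k) :
    ((X ^ (m + 1) - 1 : R[X]) ^ l).coeff k = 0 := by
  have hexpand : (X ^ (m + 1) - 1 : R[X]) ^ l = expand R (m + 1) ((X - 1) ^ l) := by simp
  rw [hexpand, coeff_expand m.succ_pos, if_neg hk]

variable {p n q : ℕ} [Fact p.Prime] [CharP R p]

lemma geomPoly_pow_mul_X_pow_sub_one (hq : q = p ^ n) :
    geomPoly R q ^ (q - 1) * (X ^ q - 1) = (X ^ (q + 1) - 1) ^ (q - 1) * (X - 1) := by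
  have hq1 : 1 ≤ q := hq ▸ Nat.one_le_pow _ _ (Fact.out : p.Prime).pos
  have hfrob : (X ^ q - 1 : R[X]) = (X - 1) ^ (q - 1) * (X - 1) := by
    rw [← pow_succ, Nat.sub_add_cancel hq1, hq, sub_pow_char_pow, one_pow]
  rw [hfrob, ← mul_assoc, ← mul_pow, geomPoly, geom_sum_mul]

lemma coeff_geomPoly_pow_sub_one_mul (hq : q = p ^ n) {j : ℕ} (hj : j ≤ q - 2) :
    (geomPoly R q ^ (q - 1)).coeff (q * j) = 1 := by
  induction j with
  | zero => simp [geomPoly, coeff_zero_eq_eval_zero, eval_finsetSum]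
  | succ j ih =>
    have hlhs := coeff_mul_X_pow_sub_one (geomPoly R q ^ (q - 1)) (q * j) q
    have hrhs := coeff_mul_X_sub_one ((X ^ (q + 1) - 1 : R[X]) ^ (q - 1)) (q * j + q - 1)
    rw [Nat.sub_add_cancel (by omega), ← geomPoly_pow_mul_X_pow_sub_one hq, hlhs, ih (by omega),
      coeff_X_pow_sub_one_pow_eq_zero, coeff_X_pow_sub_one_pow_eq_zero] at hrhs
    · rw [mul_add_one]; linear_combination -hrhs
    -- `q * j + q - 1` and `q * j + q` lie strictly between `(q + 1) * j` and `(q + 1) * (j + 1)`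
    all_goals
      refine Nat.not_dvd_of_lt_of_lt_mul_succ (k := j) ?_ ?_ <;>
        simp only [add_mul, mul_add, one_mul, mul_one] <;> omega

lemma geomPoly_pow_char_pow (hq : q = p ^ n) :
    geomPoly R q ^ q = ∑ i ∈ range (q + 1), X ^ (q * i) := by
  conv_lhs => rw [geomPoly, hq, sum_pow_char_pow]
  simp_rw [← pow_mul, ← hq, mul_comm]

theorem coeff_geomPoly_pow_two_mul_sub_one (hq : q = p ^ n) (hn : n ≠ 0) :
    (geomPoly R q ^ (2 * q - 1)).coeff (q * (q - 2)) = -1 := by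
  have hq2 : 2 ≤ q := hq ▸ (Nat.one_lt_pow hn (Fact.out : p.Prime).one_lt)
  have hterm : ∀ i ∈ range (q + 1),
      (X ^ (q * i) * geomPoly R q ^ (q - 1)).coeff (q * (q - 2)) = if i ≤ q - 2 then 1 else 0 := by
    intro i _
    rw [coeff_X_pow_mul']
    simp_rw [Nat.mul_le_mul_left_iff (show 0 < q by omega)]
    split_ifs with hi
    · rw [← Nat.mul_sub, coeff_geomPoly_pow_sub_one_mul hq (by omega)]
    · rfl
  have hcard : #{i ∈ range (q + 1) | i ≤ q - 2} = q - 1 := by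
    rw [show {i ∈ range (q + 1) | i ≤ q - 2} = range (q - 1) by ext; simp; omega, card_range]
  have hq0 : (q : R) = 0 := by rw [hq, Nat.cast_pow, CharP.cast_eq_zero, zero_pow hn]
  rw [show 2 * q - 1 = q + (q - 1) by omega, pow_add, geomPoly_pow_char_pow hq, sum_mul,
    finsetSum_coeff, sum_congr rfl hterm, sum_boole, hcard, Nat.cast_sub (by omega), hq0,
    Nat.cast_one, zero_sub]

end Polynomial

section Dehomogenization

variable {R : Type*} [CommSemiring R]

lemma aeval_one_X_monomial (m : Fin 2 →₀ ℕ) (c : R) :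
    aeval ![1, Polynomial.X] (monomial m c) = Polynomial.monomial (m 1) c := by
  rw [aeval_monomial, Finsupp.prod_fintype _ _ (fun _ => pow_zero _), Fin.prod_univ_two]
  simp [Polynomial.C_mul_X_pow_eq_monomial]

theorem coeff_aeval_one_X_of_isHomogeneous {P : MvPolynomial (Fin 2) R} {a b d : ℕ}
    (hP : P.IsHomogeneous d) (hd : a + b = d) :
    (aeval ![1, Polynomial.X] P).coeff b = coeff (Finsupp.single 0 a + Finsupp.single 1 b) P := by
  set T : Fin 2 →₀ ℕ := Finsupp.single 0 a + Finsupp.single 1 b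
  have hunique : ∀ m, coeff m P ≠ 0 → m 1 = b → m = T := by
    intro m hm hb
    have hdeg : m 0 + m 1 = d := by
      by_contra h
      exact hm (hP.coeff_eq_zero (by rwa [Finsupp.degree_eq_sum, Fin.sum_univ_two]))
    ext i
    fin_cases i <;> simp [T] <;> omega
  conv_lhs => rw [P.as_sum]
  simp_rw [map_sum, aeval_one_X_monomial, Polynomial.finsetSum_coeff, Polynomial.coeff_monomial]
  rw [sum_eq_single T]
  · simp [T]
  · intro m hm hmT
    rw [if_neg (fun hb => hmT (hunique m (mem_support_iff.mp hm) hb))]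
  · intro hT
    rw [notMem_support_iff.mp hT, ite_self]

end Dehomogenization

namespace MvPolynomial

variable {R σ : Type*} [CommSemiring R]

lemma coeff_mul_X_pow' (P : MvPolynomial σ R) (m : σ →₀ ℕ) (i : σ) (N : ℕ) :
    coeff m (P * X i ^ N) = if N ≤ m i then coeff (m - Finsupp.single i N) P else 0 := by
  simp only [X_pow_eq_monomial, coeff_mul_monomial', Finsupp.single_le_iff, mul_one]

end MvPolynomial

lemma coeff_eq_zero_of_mem_frobIdeal {F : Type} [Field F] {n N : ℕ} {P : MvPolynomial (Fin n) F}
    (hP : P ∈ frobIdeal F n N) {m : Fin n →₀ ℕ} (hm : ∀ i, m i < N) : coeff m P = 0 := by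
  have hmonomial : frobIdeal F n N
      = Ideal.span ((fun s => monomial s (1 : F)) '' Set.range fun i => Finsupp.single i N) := by
    rw [frobIdeal, ← Set.range_comp]
    simp_rw [X_pow_eq_monomial]
    rfl
  rw [hmonomial, mem_ideal_span_monomial_image] at hP
  by_contra h
  obtain ⟨_, ⟨i, rfl⟩, hle⟩ := hP m (mem_support_iff.mpr h)
  exact (hm i).not_ge (Finsupp.single_le_iff.mp hle)

lemma two_mul_sq_le_pow_three {q : ℕ} (hq : 2 ≤ q) : 2 * q ^ 2 ≤ q ^ 3 := by
  rw [pow_succ _ 2, mul_comm]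
  exact Nat.mul_le_mul_left _ hq

section Dickson

variable {F : Type} [Field F]

lemma isHomogeneous_S0 (q : ℕ) : (S0 F q).IsHomogeneous (q * (q - 1)) := by
  refine IsHomogeneous.sum _ _ _ fun i hi => ?_
  have hdeg : (q - i) * (q - 1) + i * (q - 1) = q * (q - 1) := by
    rw [← add_mul, Nat.sub_add_cancel (by simpa [Nat.lt_succ_iff] using hi)]
  exact hdeg ▸ (isHomogeneous_X_pow _ _).mul (isHomogeneous_X_pow _ _)

lemma aeval_S0 (q : ℕ) :
    aeval ![1, Polynomial.X] (S0 F q) = Polynomial.expand F (q - 1) (Polynomial.geomPoly F q) := by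
  simp [S0, Polynomial.geomPoly, ← pow_mul, mul_comm]

lemma S1_eq_S0_mul_sub (q : ℕ) :
    S1 F q = S0 F q * X 1 ^ (q - 1) - X 1 ^ ((q + 1) * (q - 1)) := by
  set f : ℕ → MvPolynomial (Fin 2) F := fun i => X 0 ^ ((q + 1 - i) * (q - 1)) * X 1 ^ (i * (q - 1))
  have hS1 : S1 F q = ∑ i ∈ range q, f (i + 1) := by
    rw [S1, range_eq_Ico, sum_Ico_add' f, zero_add]
    rfl
  have hS0 : S0 F q * X 1 ^ (q - 1) = ∑ i ∈ range (q + 1), f (i + 1) := by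
    rw [S0, sum_mul]
    refine sum_congr rfl fun i _ => ?_
    simp only [f, mul_assoc, ← pow_add, Nat.add_sub_add_right, add_one_mul]
  rw [hS0, sum_range_succ, hS1]
  simp [f]

variable {p n q : ℕ} [Fact p.Prime] [CharP F p]

lemma S1_pow_mul_S0_pow (hq : q = p ^ n) :
    S1 F q ^ q * S0 F q ^ (q - 1) = S0 F q ^ (2 * q - 1) * X 1 ^ ((q - 1) * q)
      - S0 F q ^ (q - 1) * X 1 ^ ((q + 1) * (q - 1) * q) := by
  have hq1 : 1 ≤ q := hq ▸ Nat.one_le_pow _ _ (Fact.out : p.Prime).pos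
  have hfrob : ∀ a b : MvPolynomial (Fin 2) F, (a - b) ^ q = a ^ q - b ^ q :=
    fun a b => hq ▸ sub_pow_char_pow a b n
  rw [S1_eq_S0_mul_sub, hfrob, mul_pow, ← pow_mul, ← pow_mul,
    show 2 * q - 1 = q + (q - 1) by omega, pow_add]
  ring

theorem coeff_S1_pow_mul_S0_pow (hq : q = p ^ n) (hn : n ≠ 0) :
    coeff (Finsupp.single 0 (q ^ 3 - q) + Finsupp.single 1 (q ^ 3 - 2 * q ^ 2 + q))
      (S1 F q ^ q * S0 F q ^ (q - 1)) = -1 := by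
  have hq2 : 2 ≤ q := hq ▸ (Nat.one_lt_pow hn (Fact.out : p.Prime).one_lt)
  have hcube := two_mul_sq_le_pow_three hq2
  have hexp0 : q ^ 3 - q = (q + 1) * (q - 1) * q := by
    zify [show 1 ≤ q by omega, show q ≤ q ^ 3 by nlinarith]; ring
  have hexp1 : q ^ 3 - 2 * q ^ 2 + q = (q - 1) * q + (q - 1) * (q * (q - 2)) := by
    zify [show 1 ≤ q by omega, hq2, hcube]; ring
  have hdeg : (q + 1) * (q - 1) * q + (q - 1) * (q * (q - 2)) = q * (q - 1) * (2 * q - 1) := by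
    zify [show 1 ≤ q by omega, hq2, show 1 ≤ 2 * q by omega]; ring
  have hshift : (Finsupp.single 0 ((q + 1) * (q - 1) * q)
        + Finsupp.single 1 ((q - 1) * q + (q - 1) * (q * (q - 2))) - Finsupp.single 1 ((q - 1) * q)
        : Fin 2 →₀ ℕ)
      = Finsupp.single 0 ((q + 1) * (q - 1) * q) + Finsupp.single 1 ((q - 1) * (q * (q - 2))) := by
    ext i; fin_cases i <;> simp
  have hT1 : (Finsupp.single 0 ((q + 1) * (q - 1) * q)
        + Finsupp.single 1 ((q - 1) * q + (q - 1) * (q * (q - 2))) : Fin 2 →₀ ℕ) 1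
      = (q - 1) * q + (q - 1) * (q * (q - 2)) := by simp
  have hlt : (q - 1) * q + (q - 1) * (q * (q - 2)) < (q + 1) * (q - 1) * q := by
    zify [show 1 ≤ q by omega, hq2]; nlinarith
  rw [hexp0, hexp1, S1_pow_mul_S0_pow hq, coeff_sub, coeff_mul_X_pow', coeff_mul_X_pow']
  simp only [hT1, if_pos (Nat.le_add_right _ _), if_neg hlt.not_ge, sub_zero, hshift]
  rw [← coeff_aeval_one_X_of_isHomogeneous ((isHomogeneous_S0 q).pow (2 * q - 1)) hdeg, map_pow,
    aeval_S0, ← map_pow, Polynomial.coeff_expand_mul' (by omega),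
    Polynomial.coeff_geomPoly_pow_two_mul_sub_one hq hn]

end Dickson

/-- the coefficient of `x_1^{q³-q} x_2^{q³-2q²+q}` in `S_1^q·S_0^{q-1}`
is `-1`, and in particular `S_1^q·S_0^{q-1} ≠ 0` in
`Q = F_q[x_1,x_2]/(x_1^{q³},x_2^{q³})`. -/
theorem statement19 (F : Type) [Field F] [Fintype F] (q : ℕ) (hq : Fintype.card F = q) :
    MvPolynomial.coeff
        (Finsupp.single 0 (q ^ 3 - q) + Finsupp.single 1 (q ^ 3 - 2 * q ^ 2 + q))
        (S1 F q ^ q * S0 F q ^ (q - 1)) = -1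
    ∧ Ideal.Quotient.mk (frobIdeal F 2 (q ^ 3)) (S1 F q ^ q * S0 F q ^ (q - 1)) ≠ 0 := by
  obtain ⟨p, _, n, hp, hcard⟩ := FiniteField.card' F
  have : Fact p.Prime := ⟨hp⟩
  have hcoeff := coeff_S1_pow_mul_S0_pow (F := F) (hq.symm.trans hcard) n.ne_zero
  refine ⟨hcoeff, fun hzero => ?_⟩
  have hq2 : 2 ≤ q := hq ▸ Fintype.one_lt_card
  have hexp_lt : ∀ i, (Finsupp.single 0 (q ^ 3 - q) + Finsupp.single 1 (q ^ 3 - 2 * q ^ 2 + q)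
      : Fin 2 →₀ ℕ) i < q ^ 3 := by
    have := two_mul_sq_le_pow_three hq2
    have : q < q ^ 2 := by nlinarith
    intro i; fin_cases i <;> simp <;> omega
  have hvanish := coeff_eq_zero_of_mem_frobIdeal (Ideal.Quotient.eq_zero_iff_mem.mp hzero) hexp_lt
  rw [hcoeff] at hvanish
  exact one_ne_zero (neg_eq_zero.mp hvanish)
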